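/- arXiv:1404.7518 — 2 statements merged into one kernel-verified Lean document; each statement's English description precedes it below -/
import Mathlib

section
/- For H ∈ (1/2, 1), H(2H−1) ∫_0^1 ∫_0^1 (1−t)^{−1/2} (1−s)^{−1/2} |t−s|^{2H−2} dt ds = 2H · B(2H−1, 1/2), where B denotes the Euler Beta function. -/
/-!
Reflecting `s ↦ 1 - s`, `t ↦ 1 - t` turns the integrand into the symmetric kernel
`s^(x-1) t^(x-1) |t - s|^(y-1)` with `x = 1/2`, `y = 2H - 1`, so the double integral over the
square is twice the integral over the triangle `t ≤ s`. On the triangle the inner integral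
scales to `s^(x+y-1) B(x, y)`, and integrating `s^(2x+y-2)` over `(0, 1]` leaves
`2 B(x, y) / (2x + y - 1) = 2 B(2H - 1, 1/2) / (2H - 1)`.
Both the symmetry and the swap of integrals are done for lower Lebesgue integrals, where Tonelli
needs no integrability, and only the final value is converted back to Bochner integrals.
-/

open intervalIntegral

open MeasureTheory Set Function Real
open scoped ENNReal

noncomputable def realBetaIntegral (x y : ℝ) : ℝ :=
  ∫ u in (0 : ℝ)..1, u ^ (x - 1) * (1 - u) ^ (y - 1)

theorem realBetaIntegral_comm (x y : ℝ) : realBetaIntegral y x = realBetaIntegral x y := by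
  unfold realBetaIntegral
  convert integral_comp_sub_left (a := 0) (b := 1)
    (fun u => u ^ (x - 1) * (1 - u) ^ (y - 1)) (1 : ℝ) using 1 <;> simp [mul_comm]

theorem realBetaIntegral_nonneg (x y : ℝ) : 0 ≤ realBetaIntegral x y :=
  integral_nonneg zero_le_one fun _ hu =>
    mul_nonneg (rpow_nonneg hu.1 _) (rpow_nonneg (sub_nonneg.2 hu.2) _)

theorem intervalIntegrable_rpow_mul_sub_rpow {x y t : ℝ} (hx : 0 < x) (hy : 0 < y)
    (ht : 0 < t) :
    IntervalIntegrable (fun s => s ^ (x - 1) * (t - s) ^ (y - 1)) volume 0 t := by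
  have hleft :
      IntervalIntegrable (fun s => s ^ (x - 1) * (t - s) ^ (y - 1)) volume 0 (t / 2) := by
    refine (intervalIntegrable_rpow' (by linarith)).mul_continuousOn
      (ContinuousOn.rpow_const (by fun_prop) fun s hs => Or.inl ?_)
    rw [uIcc_of_le (by linarith)] at hs
    linarith [hs.2]
  have hright :
      IntervalIntegrable (fun s => s ^ (x - 1) * (t - s) ^ (y - 1)) volume (t / 2) t := by
    refine IntervalIntegrable.continuousOn_mul ?_
      (ContinuousOn.rpow_const continuousOn_id fun s hs => Or.inl ?_)
    · simpa [show t - t / 2 = t / 2 by ring] using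
        ((intervalIntegrable_rpow' (a := 0) (b := t / 2) (by linarith : -1 < y - 1)).comp_sub_left
          t).symm
    · rw [uIcc_of_le (by linarith)] at hs
      exact (show 0 < s by linarith [hs.1]).ne'
  exact hleft.trans hright

theorem integral_rpow_mul_sub_rpow (x y : ℝ) {t : ℝ} (ht : 0 < t) :
    ∫ s in (0 : ℝ)..t, s ^ (x - 1) * (t - s) ^ (y - 1)
      = t ^ (x + y - 1) * realBetaIntegral x y := by
  have hscale := smul_integral_comp_mul_right (a := 0) (b := 1)
    (fun s => s ^ (x - 1) * (t - s) ^ (y - 1)) t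
  rw [zero_mul, one_mul] at hscale
  rw [← hscale, realBetaIntegral, smul_eq_mul, ← intervalIntegral.integral_const_mul,
    ← intervalIntegral.integral_const_mul]
  refine intervalIntegral.integral_congr fun u hu => ?_
  rw [uIcc_of_le zero_le_one] at hu
  rw [show t - u * t = (1 - u) * t by ring, mul_rpow hu.1 ht.le,
    mul_rpow (sub_nonneg.2 hu.2) ht.le, show x + y - 1 = 1 + (x - 1) + (y - 1) by ring,
    rpow_add ht, rpow_add ht, rpow_one]
  ring

theorem lintegral_Ioc_ofReal_mul_rpow {c r : ℝ} (hc : 0 ≤ c) (hr : -1 < r) :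
    ∫⁻ s in Ioc (0 : ℝ) 1, ENNReal.ofReal (c * s ^ r) = ENNReal.ofReal (c / (r + 1)) := by
  rw [← ofReal_integral_eq_lintegral_ofReal, ← intervalIntegral.integral_of_le zero_le_one,
    intervalIntegral.integral_const_mul, integral_rpow (Or.inl hr), one_rpow,
    zero_rpow (by linarith), sub_zero, mul_one_div]
  · exact (intervalIntegrable_iff_integrableOn_Ioc_of_le zero_le_one).1
      ((intervalIntegrable_rpow' hr).const_mul c)
  · exact ae_restrict_of_forall_mem measurableSet_Ioc fun s hs =>
      mul_nonneg hc (rpow_nonneg hs.1.le _)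

section Symmetric

variable {α : Type*} [MeasurableSpace α] [LinearOrder α] [TopologicalSpace α]
  [OrderClosedTopology α] [SecondCountableTopology α] [OpensMeasurableSpace α]
  {ρ : Measure α} [SFinite ρ]

theorem lintegral_lintegral_eq_two_mul_of_symm [NullSingletonClass ρ] {K : α → α → ℝ≥0∞}
    (hK : Measurable (uncurry K)) (hsymm : ∀ s t, K s t = K t s) :
    ∫⁻ s, ∫⁻ t, K s t ∂ρ ∂ρ = 2 * ∫⁻ s, ∫⁻ t in Iic s, K s t ∂ρ ∂ρ := by
  have hle : MeasurableSet {z : α × α | z.2 ≤ z.1} :=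
    measurableSet_le measurable_snd measurable_fst
  have hlt : MeasurableSet {z : α × α | z.1 < z.2} :=
    measurableSet_lt measurable_fst measurable_snd
  have hIic (s : α) : ∫⁻ t in Iic s, K s t ∂ρ
      = ∫⁻ t, {z : α × α | z.2 ≤ z.1}.indicator (uncurry K) (s, t) ∂ρ := by
    rw [← lintegral_indicator measurableSet_Iic]
    rfl
  have hIoi (s : α) : ∫⁻ t in Ioi s, K s t ∂ρ
      = ∫⁻ t, {z : α × α | z.1 < z.2}.indicator (uncurry K) (s, t) ∂ρ := by
    rw [← lintegral_indicator measurableSet_Ioi]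
    rfl
  have hIio (t : α) : ∫⁻ s in Iio t, K s t ∂ρ
      = ∫⁻ s, {z : α × α | z.1 < z.2}.indicator (uncurry K) (s, t) ∂ρ := by
    rw [← lintegral_indicator measurableSet_Iio]
    rfl
  have hswap : ∫⁻ s, ∫⁻ t in Ioi s, K s t ∂ρ ∂ρ = ∫⁻ s, ∫⁻ t in Iic s, K s t ∂ρ ∂ρ := calc
    _ = ∫⁻ t, ∫⁻ s in Iio t, K s t ∂ρ ∂ρ := by
      simp_rw [hIoi, hIio]
      exact lintegral_lintegral_swap (hK.indicator hlt).aemeasurable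
    _ = ∫⁻ s, ∫⁻ t in Iic s, K s t ∂ρ ∂ρ := by
      simp_rw [setLIntegral_congr Iio_ae_eq_Iic, hsymm]
  calc ∫⁻ s, ∫⁻ t, K s t ∂ρ ∂ρ
      = ∫⁻ s, (∫⁻ t in Iic s, K s t ∂ρ + ∫⁻ t in Ioi s, K s t ∂ρ) ∂ρ := by
        simp_rw [← compl_Iic, lintegral_add_compl _ measurableSet_Iic]
    _ = 2 * ∫⁻ s, ∫⁻ t in Iic s, K s t ∂ρ ∂ρ := by
        rw [lintegral_add_left, hswap, two_mul]
        simp_rw [hIic]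
        exact (hK.indicator hle).lintegral_prod_right'

end Symmetric

theorem integral_integral_eq_toReal_lintegral_lintegral {α β : Type*} [MeasurableSpace α]
    [MeasurableSpace β] {μ : Measure α} {ν : Measure β} [SFinite ν] {f : α → β → ℝ}
    (hf : Measurable (uncurry f)) (hf₀ : ∀ᵐ s ∂μ, 0 ≤ᵐ[ν] f s)
    (hfin : ∫⁻ s, ∫⁻ t, ENNReal.ofReal (f s t) ∂ν ∂μ ≠ ∞) :
    ∫ s, ∫ t, f s t ∂ν ∂μ = (∫⁻ s, ∫⁻ t, ENNReal.ofReal (f s t) ∂ν ∂μ).toReal := by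
  have hmeas : Measurable fun s => ∫⁻ t, ENNReal.ofReal (f s t) ∂ν :=
    hf.ennreal_ofReal.lintegral_prod_right'
  rw [← integral_toReal hmeas.aemeasurable (ae_lt_top' hmeas.aemeasurable hfin)]
  refine integral_congr_ae (hf₀.mono fun s hs => ?_)
  exact integral_eq_lintegral_of_nonneg_ae hs hf.of_uncurry_left.aestronglyMeasurable

section BetaKernel

variable {x y : ℝ}

noncomputable def betaKernel (x y s t : ℝ) : ℝ :=
  s ^ (x - 1) * t ^ (x - 1) * |t - s| ^ (y - 1)

theorem betaKernel_comm (s t : ℝ) : betaKernel x y s t = betaKernel x y t s := by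
  rw [betaKernel, betaKernel, abs_sub_comm]
  ring

theorem betaKernel_nonneg {s t : ℝ} (hs : 0 ≤ s) (ht : 0 ≤ t) : 0 ≤ betaKernel x y s t := by
  unfold betaKernel
  positivity

theorem measurable_betaKernel : Measurable (uncurry (betaKernel x y)) := by
  unfold betaKernel
  fun_prop

theorem betaKernel_of_le {s t : ℝ} (h : t ≤ s) :
    betaKernel x y s t = s ^ (x - 1) * (t ^ (x - 1) * (s - t) ^ (y - 1)) := by
  rw [betaKernel, abs_sub_comm, abs_of_nonneg (sub_nonneg.2 h)]
  ring

theorem integrableOn_betaKernel (hx : 0 < x) (hy : 0 < y) {s : ℝ} (hs : 0 < s) :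
    IntegrableOn (betaKernel x y s) (Ioc 0 s) := by
  refine (((intervalIntegrable_iff_integrableOn_Ioc_of_le hs.le).1
    ((intervalIntegrable_rpow_mul_sub_rpow hx hy hs).const_mul (s ^ (x - 1)))).congr_fun
      (fun t ht => ?_) measurableSet_Ioc)
  rw [betaKernel_of_le ht.2]

theorem setIntegral_betaKernel {s : ℝ} (hs : 0 < s) :
    ∫ t in Ioc 0 s, betaKernel x y s t = realBetaIntegral x y * s ^ (2 * x + y - 2) := by
  calc ∫ t in Ioc 0 s, betaKernel x y s t
      = s ^ (x - 1) * ∫ t in (0 : ℝ)..s, t ^ (x - 1) * (s - t) ^ (y - 1) := by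
        rw [← intervalIntegral.integral_of_le hs.le, ← intervalIntegral.integral_const_mul]
        refine intervalIntegral.integral_congr fun t ht => ?_
        rw [uIcc_of_le hs.le] at ht
        exact betaKernel_of_le ht.2
    _ = realBetaIntegral x y * s ^ (2 * x + y - 2) := by
        rw [integral_rpow_mul_sub_rpow x y hs, ← mul_assoc, ← rpow_add hs, mul_comm,
          show x - 1 + (x + y - 1) = 2 * x + y - 2 by ring]

theorem lintegral_betaKernel (hx : 0 < x) (hy : 0 < y) {s : ℝ} (hs : 0 < s) :
    ∫⁻ t in Ioc 0 s, ENNReal.ofReal (betaKernel x y s t)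
      = ENNReal.ofReal (realBetaIntegral x y * s ^ (2 * x + y - 2)) := by
  rw [← setIntegral_betaKernel hs, ofReal_integral_eq_lintegral_ofReal
    (integrableOn_betaKernel hx hy hs)]
  exact ae_restrict_of_forall_mem measurableSet_Ioc fun t ht =>
    betaKernel_nonneg hs.le ht.1.le

theorem lintegral_lintegral_betaKernel (hx : 0 < x) (hy : 0 < y) (hxy : 1 < 2 * x + y) :
    ∫⁻ s in Ioc (0 : ℝ) 1, ∫⁻ t in Ioc (0 : ℝ) 1, ENNReal.ofReal (betaKernel x y s t)
      = ENNReal.ofReal (2 * realBetaIntegral x y / (2 * x + y - 1)) := by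
  have hinner (s : ℝ) (hs : s ∈ Ioc (0 : ℝ) 1) :
      ∫⁻ t in Iic s, ENNReal.ofReal (betaKernel x y s t) ∂volume.restrict (Ioc 0 1)
        = ENNReal.ofReal (realBetaIntegral x y * s ^ (2 * x + y - 2)) := by
    rw [Measure.restrict_restrict measurableSet_Iic, Iic_inter_Ioc_of_le hs.2,
      lintegral_betaKernel hx hy hs.1]
  rw [lintegral_lintegral_eq_two_mul_of_symm measurable_betaKernel.ennreal_ofReal
      (fun s t => by rw [betaKernel_comm]),
    setLIntegral_congr_fun measurableSet_Ioc hinner,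
    lintegral_Ioc_ofReal_mul_rpow (realBetaIntegral_nonneg x y) (by linarith),
    show 2 * x + y - 2 + 1 = 2 * x + y - 1 by ring, ← ENNReal.ofReal_ofNat 2,
    ← ENNReal.ofReal_mul zero_le_two, mul_div_assoc]

theorem integral_integral_betaKernel (hx : 0 < x) (hy : 0 < y) (hxy : 1 < 2 * x + y) :
    ∫ s in (0 : ℝ)..1, ∫ t in (0 : ℝ)..1, betaKernel x y s t
      = 2 * realBetaIntegral x y / (2 * x + y - 1) := by
  have hnonneg : ∀ᵐ s ∂volume.restrict (Ioc (0 : ℝ) 1),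
      0 ≤ᵐ[volume.restrict (Ioc (0 : ℝ) 1)] betaKernel x y s :=
    ae_restrict_of_forall_mem measurableSet_Ioc fun s hs =>
      ae_restrict_of_forall_mem measurableSet_Ioc fun t ht => betaKernel_nonneg hs.1.le ht.1.le
  simp only [intervalIntegral.integral_of_le zero_le_one]
  rw [integral_integral_eq_toReal_lintegral_lintegral measurable_betaKernel hnonneg
      (lintegral_lintegral_betaKernel hx hy hxy ▸ ENNReal.ofReal_ne_top),
    lintegral_lintegral_betaKernel hx hy hxy, ENNReal.toReal_ofReal]
  exact div_nonneg (mul_nonneg zero_le_two (realBetaIntegral_nonneg x y)) (by linarith)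

end BetaKernel

theorem integral_integral_comp_one_sub (f : ℝ → ℝ → ℝ) :
    ∫ s in (0 : ℝ)..1, ∫ t in (0 : ℝ)..1, f (1 - s) (1 - t)
      = ∫ s in (0 : ℝ)..1, ∫ t in (0 : ℝ)..1, f s t := by
  have hflip (g : ℝ → ℝ) : ∫ s in (0 : ℝ)..1, g (1 - s) = ∫ s in (0 : ℝ)..1, g s := by
    rw [intervalIntegral.integral_comp_sub_left g 1]
    norm_num
  simp only [hflip (f _)]
  exact hflip fun s => ∫ t in (0 : ℝ)..1, f s t

theorem fbm_wiener_integral_variance_general (H : ℝ) (hH : 1 / 2 < H) :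
    H * (2 * H - 1) *
      ∫ s in (0 : ℝ)..1, ∫ t in (0 : ℝ)..1,
        (1 - t) ^ (-(1 / 2 : ℝ)) * (1 - s) ^ (-(1 / 2 : ℝ)) * |t - s| ^ (2 * H - 2)
    = 2 * H * ∫ u in (0 : ℝ)..1, u ^ (2 * H - 1 - 1) * (1 - u) ^ ((1 / 2 : ℝ) - 1) := by
  have hreflect : ∫ s in (0 : ℝ)..1, ∫ t in (0 : ℝ)..1,
        (1 - t) ^ (-(1 / 2 : ℝ)) * (1 - s) ^ (-(1 / 2 : ℝ)) * |t - s| ^ (2 * H - 2)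
      = ∫ s in (0 : ℝ)..1, ∫ t in (0 : ℝ)..1, betaKernel (1 / 2) (2 * H - 1) (1 - s) (1 - t) := by
    refine intervalIntegral.integral_congr fun s _ => intervalIntegral.integral_congr fun t _ => ?_
    rw [betaKernel, show (1 / 2 : ℝ) - 1 = -(1 / 2) by norm_num,
      show 2 * H - 1 - 1 = 2 * H - 2 by ring, show 1 - t - (1 - s) = s - t by ring, abs_sub_comm]
    ring
  rw [hreflect, integral_integral_comp_one_sub (betaKernel (1 / 2) (2 * H - 1)),
    integral_integral_betaKernel (by norm_num) (by linarith) (by linarith)]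
  change _ = 2 * H * realBetaIntegral (2 * H - 1) (1 / 2)
  rw [realBetaIntegral_comm, show 2 * (1 / 2 : ℝ) + (2 * H - 1) - 1 = 2 * H - 1 by ring]
  linear_combination (2 * H) * div_mul_cancel₀ (realBetaIntegral (2 * H - 1) (1 / 2))
    (by linarith : 2 * H - 1 ≠ 0)

/-- For `H ∈ (1/2,1)`,
`H(2H−1) ∫_0^1 ∫_0^1 (1−t)^{−1/2}(1−s)^{−1/2}|t−s|^{2H−2} dt ds = 2H · B(2H−1, 1/2)`,
with the Beta function `B(x,y) = ∫_0^1 u^{x−1}(1−u)^{y−1} du`. -/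
theorem fbm_wiener_integral_variance (H : ℝ) (hH : 1 / 2 < H) (hH1 : H < 1) :
    H * (2 * H - 1) *
      ∫ s in (0 : ℝ)..1, ∫ t in (0 : ℝ)..1,
        (1 - t) ^ (-(1 / 2 : ℝ)) * (1 - s) ^ (-(1 / 2 : ℝ)) * |t - s| ^ (2 * H - 2)
    = 2 * H * ∫ u in (0 : ℝ)..1, u ^ (2 * H - 1 - 1) * (1 - u) ^ ((1 / 2 : ℝ) - 1) :=
  fbm_wiener_integral_variance_general H hH
end

section
/- Let 0 ≤ t_n < τ < t_{n+1} ≤ 1 and β ∈ (0, 1/2). Define ψ(t) = (t_{n+1} − t)^{−1/2} for t ∈ [t_n, τ) and ψ(t) = 0 for t ∈ [τ, t_{n+1}]. Then there is a constant C = C(β) such that ∫_{t_n}^{t_{n+1}} ∫_{t_n}^{t} |ψ(t) − ψ(s)| (t − s)^{−β−1} ds dt ≤ C (t_{n+1} − t_n)^{1/2 − β}. -/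
open intervalIntegral MeasureTheory Real Set

lemma sqrt_diff_le {a b : ℝ} (ha : 0 < a) (hab : a ≤ b) :
    a ^ (-(1/2 : ℝ)) - b ^ (-(1/2 : ℝ)) ≤
      (b - a) ^ ((1/2 : ℝ)) * (a ^ (-(1/2 : ℝ)) * b ^ (-(1/2 : ℝ))) := by
  have hb : 0 < b := lt_of_lt_of_le ha hab
  have hba : 0 ≤ b - a := by linarith
  rw [Real.rpow_neg ha.le, Real.rpow_neg hb.le, ← Real.sqrt_eq_rpow,
    ← Real.sqrt_eq_rpow, ← Real.sqrt_eq_rpow]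
  set sa := Real.sqrt a with hsa
  set sb := Real.sqrt b with hsb
  set sc := Real.sqrt (b - a) with hsc
  have h1 : 0 < sa := Real.sqrt_pos.mpr ha
  have h2 : 0 < sb := Real.sqrt_pos.mpr hb
  have h3 : 0 ≤ sc := Real.sqrt_nonneg _
  have e1 : sa ^ 2 = a := Real.sq_sqrt ha.le
  have e2 : sb ^ 2 = b := Real.sq_sqrt hb.le
  have e3 : sc ^ 2 = b - a := Real.sq_sqrt hba
  have hle : sa ≤ sb := Real.sqrt_le_sqrt hab
  have key : sb - sa ≤ sc := by nlinarith [sq_nonneg (sb - sa)]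
  have expand : sa⁻¹ - sb⁻¹ = (sb - sa) * (sa⁻¹ * sb⁻¹) := by
    field_simp
  rw [expand]
  exact mul_le_mul_of_nonneg_right key (by positivity)

lemma integral_sub_rpow (t a b r : ℝ) (hab : a ≤ b) (hbt : b ≤ t)
    (h : -1 < r ∨ (r ≠ -1 ∧ b < t)) :
    ∫ s in a..b, (t - s) ^ r = ((t - a) ^ (r + 1) - (t - b) ^ (r + 1)) / (r + 1) := by
  have hcond : -1 < r ∨ (r ≠ -1 ∧ (0:ℝ) ∉ Set.uIcc (t - b) (t - a)) := by
    rcases h with h | ⟨h1, h2⟩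
    · exact Or.inl h
    · refine Or.inr ⟨h1, ?_⟩
      rw [Set.uIcc_of_le (by linarith)]
      intro hmem
      simp only [Set.mem_Icc] at hmem
      linarith [hmem.1]
  rw [intervalIntegral.integral_comp_sub_left (fun x => x ^ r) t,
    integral_rpow hcond]

/-- Inner bound, case `t < τ`. -/
lemma inner1 (β : ℝ) (hβ : 0 < β) (hβ2 : β < 1/2) (tn τ tn1 t : ℝ)
    (ht0 : tn < t) (htτ : t < τ) (hτ1 : τ < tn1) :
    (∫ s in tn..t,
        |(if tn ≤ t ∧ t < τ then (tn1 - t) ^ (-(1 / 2 : ℝ)) else 0) -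
          (if tn ≤ s ∧ s < τ then (tn1 - s) ^ (-(1 / 2 : ℝ)) else 0)| *
          (t - s) ^ (-β - 1))
      ≤ (1 / ((1/2 - β)/2)) * ((tn1 - t) ^ ((1/2 - β)/2 - 1) * (t - tn) ^ ((1/2 - β)/2)) := by
  set α := (1/2 - β)/2 with hα
  have hα0 : 0 < α := by rw [hα]; linarith
  have hα2 : α < 1/2 := by rw [hα]; linarith
  have hu : 0 < tn1 - t := by linarith
  set c : ℝ := β + 1/2 + α with hc
  have hc1 : c < 1 := by rw [hc, hα]; linarith
  have hc0 : 0 < c := by rw [hc]; linarith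
  -- the dominating function
  set G : ℝ → ℝ := fun s => (t - s) ^ (-c) * (tn1 - t) ^ (α - 1) with hG
  have hGint : IntegrableOn G (Ioo tn t) := by
    have h1 : IntervalIntegrable (fun x : ℝ => x ^ (-c)) volume (t - tn) 0 :=
      intervalIntegrable_rpow' (by linarith)
    have h2 := h1.comp_sub_left t
    simp only [sub_sub_cancel, sub_zero] at h2
    have h3 := (intervalIntegrable_iff_integrableOn_Ioo_of_le ht0.le).mp h2
    exact h3.mul_const _
  rw [integral_of_le ht0.le, integral_Ioc_eq_integral_Ioo]
  have hmono : (∫ s in Ioo tn t,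
        |(if tn ≤ t ∧ t < τ then (tn1 - t) ^ (-(1 / 2 : ℝ)) else 0) -
          (if tn ≤ s ∧ s < τ then (tn1 - s) ^ (-(1 / 2 : ℝ)) else 0)| *
          (t - s) ^ (-β - 1)) ≤ ∫ s in Ioo tn t, G s := by
    apply integral_mono_of_nonneg
    · filter_upwards [ae_restrict_mem measurableSet_Ioo] with s hs
      have hx : (0:ℝ) ≤ t - s := by have := hs.2; linarith
      positivity
    · exact hGint
    · filter_upwards [ae_restrict_mem measurableSet_Ioo] with s hs
      obtain ⟨hs1, hs2⟩ := hs
      have hx : 0 < t - s := by linarith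
      have hv : 0 < tn1 - s := by linarith
      rw [if_pos ⟨ht0.le, htτ⟩, if_pos ⟨hs1.le, by linarith⟩]
      set x := t - s
      set u := tn1 - t
      set v := tn1 - s
      have hxv : x ≤ v := by simp only [x, v]; linarith
      have huv : u ≤ v := by simp only [u, v]; linarith
      have habs : |u ^ (-(1/2 : ℝ)) - v ^ (-(1/2 : ℝ))| =
          u ^ (-(1/2 : ℝ)) - v ^ (-(1/2 : ℝ)) := by
        rw [abs_of_nonneg]
        have := Real.rpow_le_rpow_of_nonpos hu huv (by norm_num : -(1/2 : ℝ) ≤ 0)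
        linarith
      rw [habs]
      have step1 : u ^ (-(1/2 : ℝ)) - v ^ (-(1/2 : ℝ)) ≤
          x ^ ((1/2 : ℝ)) * (u ^ (-(1/2 : ℝ)) * v ^ (-(1/2 : ℝ))) := by
        have := sqrt_diff_le hu huv
        have hvu : v - u = x := by simp only [x, u, v]; ring
        rwa [hvu] at this
      have step2 : v ^ (-(1/2 : ℝ)) ≤ x ^ (-α) * u ^ (α - 1/2) := by
        have e : v ^ (-(1/2 : ℝ)) = v ^ (-α) * v ^ (α - 1/2) := by
          rw [← Real.rpow_add hv]; congr 1; ring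
        rw [e]
        apply mul_le_mul
        · exact Real.rpow_le_rpow_of_nonpos hx hxv (by linarith)
        · exact Real.rpow_le_rpow_of_nonpos hu huv (by linarith)
        · exact Real.rpow_nonneg hv.le _
        · exact Real.rpow_nonneg hx.le _
      calc (u ^ (-(1/2 : ℝ)) - v ^ (-(1/2 : ℝ))) * x ^ (-β - 1)
          ≤ (x ^ ((1/2 : ℝ)) * (u ^ (-(1/2 : ℝ)) * v ^ (-(1/2 : ℝ)))) * x ^ (-β - 1) := by
            apply mul_le_mul_of_nonneg_right step1 (Real.rpow_nonneg hx.le _)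
        _ ≤ (x ^ ((1/2 : ℝ)) * (u ^ (-(1/2 : ℝ)) * (x ^ (-α) * u ^ (α - 1/2)))) * x ^ (-β - 1) := by
            have h0 : (0:ℝ) ≤ x ^ ((1/2 : ℝ)) := Real.rpow_nonneg hx.le _
            have h1 : (0:ℝ) ≤ u ^ (-(1/2 : ℝ)) := Real.rpow_nonneg hu.le _
            have h2 : (0:ℝ) ≤ x ^ (-β - 1) := Real.rpow_nonneg hx.le _
            apply mul_le_mul_of_nonneg_right _ h2
            apply mul_le_mul_of_nonneg_left _ h0
            exact mul_le_mul_of_nonneg_left step2 h1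
        _ = (x ^ ((1/2 : ℝ)) * x ^ (-α) * x ^ (-β - 1)) * (u ^ (-(1/2 : ℝ)) * u ^ (α - 1/2)) := by
            ring
        _ = G s := by
            rw [← Real.rpow_add hx, ← Real.rpow_add hx, ← Real.rpow_add hu, hG]
            have e1 : (1/2 : ℝ) + -α + (-β - 1) = -c := by rw [hc]; ring
            have e2 : -(1/2 : ℝ) + (α - 1/2) = α - 1 := by ring
            rw [e1, e2]
  refine hmono.trans ?_
  rw [← integral_Ioc_eq_integral_Ioo, ← integral_of_le ht0.le, hG]
  rw [intervalIntegral.integral_mul_const,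
    integral_sub_rpow t tn t (-c) ht0.le le_rfl (Or.inl (by linarith))]
  have hca : -c + 1 = α := by rw [hc, hα]; ring
  rw [hca, sub_self, Real.zero_rpow hα0.ne', sub_zero]
  exact le_of_eq (by ring)

/-- Inner bound, case `τ < t`. -/
lemma inner2 (β : ℝ) (hβ : 0 < β) (hβ2 : β < 1/2) (tn τ tn1 t : ℝ)
    (ht0 : tn < τ) (htτ : τ < t) (hτ1 : t ≤ tn1) :
    (∫ s in tn..t,
        |(if tn ≤ t ∧ t < τ then (tn1 - t) ^ (-(1 / 2 : ℝ)) else 0) -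
          (if tn ≤ s ∧ s < τ then (tn1 - s) ^ (-(1 / 2 : ℝ)) else 0)| *
          (t - s) ^ (-β - 1))
      ≤ (1 / (β + 1/2)) * (t - τ) ^ (-(β + 1/2)) := by
  have htt : tn < t := lt_trans ht0 htτ
  set c : ℝ := β + 3/2 with hc
  set G : ℝ → ℝ := (Iio τ).indicator (fun s => (t - s) ^ (-c)) with hG
  have hGint : IntegrableOn G (Ioo tn t) := by
    rw [hG, IntegrableOn, integrable_indicator_iff measurableSet_Iio, IntegrableOn,
      Measure.restrict_restrict measurableSet_Iio]
    have hsub : Iio τ ∩ Ioo tn t ⊆ Icc tn τ := by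
      rintro s ⟨h1, h2, h3⟩
      exact ⟨le_of_lt h2, le_of_lt h1⟩
    apply IntegrableOn.mono_set _ hsub
    apply ContinuousOn.integrableOn_compact isCompact_Icc
    apply ContinuousOn.rpow_const
    · exact (continuous_const.sub continuous_id).continuousOn
    · intro s hs
      left
      have : s ≤ τ := hs.2
      have : 0 < t - s := by linarith
      exact ne_of_gt this
  rw [integral_of_le htt.le, integral_Ioc_eq_integral_Ioo]
  have hmono : (∫ s in Ioo tn t,
        |(if tn ≤ t ∧ t < τ then (tn1 - t) ^ (-(1 / 2 : ℝ)) else 0) -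
          (if tn ≤ s ∧ s < τ then (tn1 - s) ^ (-(1 / 2 : ℝ)) else 0)| *
          (t - s) ^ (-β - 1)) ≤ ∫ s in Ioo tn t, G s := by
    apply integral_mono_of_nonneg
    · filter_upwards [ae_restrict_mem measurableSet_Ioo] with s hs
      have hx : (0:ℝ) ≤ t - s := by have := hs.2; linarith
      positivity
    · exact hGint
    · filter_upwards [ae_restrict_mem measurableSet_Ioo] with s hs
      obtain ⟨hs1, hs2⟩ := hs
      have hx : 0 < t - s := by linarith
      rw [if_neg (by rintro ⟨-, h⟩; linarith)]
      by_cases hsτ : s < τ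
      · rw [if_pos ⟨hs1.le, hsτ⟩, hG]
        have hGeq : (Iio τ).indicator (fun s => (t - s) ^ (-c)) s = (t - s) ^ (-c) :=
          Set.indicator_of_mem (show s ∈ Set.Iio τ from hsτ) _
        rw [hGeq, zero_sub, abs_neg, abs_of_nonneg (Real.rpow_nonneg (by linarith) _)]
        have step : (tn1 - s) ^ (-(1/2 : ℝ)) ≤ (t - s) ^ (-(1/2 : ℝ)) :=
          Real.rpow_le_rpow_of_nonpos hx (by linarith) (by norm_num)
        calc (tn1 - s) ^ (-(1/2 : ℝ)) * (t - s) ^ (-β - 1)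
            ≤ (t - s) ^ (-(1/2 : ℝ)) * (t - s) ^ (-β - 1) :=
              mul_le_mul_of_nonneg_right step (Real.rpow_nonneg hx.le _)
          _ = (t - s) ^ (-c) := by
              rw [← Real.rpow_add hx]; congr 1; rw [hc]; ring
      · rw [if_neg (by rintro ⟨-, h⟩; exact hsτ h), hG,
          Set.indicator_of_notMem (show s ∉ Set.Iio τ from hsτ)]
        simp
  refine hmono.trans ?_
  rw [hG, ← MeasureTheory.integral_indicator measurableSet_Ioo,
    Set.indicator_indicator]
  have hinter : Ioo tn t ∩ Iio τ = Ioo tn τ := by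
    ext s
    simp only [Set.mem_inter_iff, Set.mem_Iio, Set.mem_Ioo]
    constructor
    · rintro ⟨⟨h2, h3⟩, h1⟩; exact ⟨h2, h1⟩
    · rintro ⟨h1, h2⟩; exact ⟨⟨h1, by linarith⟩, h2⟩
  rw [hinter, MeasureTheory.integral_indicator measurableSet_Ioo, ← integral_Ioc_eq_integral_Ioo,
    ← integral_of_le ht0.le,
    integral_sub_rpow t tn τ (-c) ht0.le htτ.le (Or.inr ⟨by rw [hc]; intro h; linarith, htτ⟩)]
  have hca : -c + 1 = -(β + 1/2) := by rw [hc]; ring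
  rw [hca]
  have h1 : (0:ℝ) ≤ (t - tn) ^ (-(β + 1/2)) := Real.rpow_nonneg (by linarith) _
  have h2 : (0:ℝ) < β + 1/2 := by linarith
  set X := (t - τ) ^ (-(β + 1/2)) with hX
  set Y := (t - tn) ^ (-(β + 1/2)) with hY
  have e1 : (Y - X) / (-(β + 1/2)) = (X - Y) / (β + 1/2) := by
    rw [div_neg]
    ring
  have e2 : (1 / (β + 1/2)) * X = X / (β + 1/2) := one_div_mul_eq_div _ _
  rw [e1, e2]
  gcongr
  linarith

/-- For `β ∈ (0,1/2)` there is `C = C(β) > 0` such that for all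
`0 ≤ t_n < τ < t_{n+1} ≤ 1` and `ψ(t) = (t_{n+1}−t)^{−1/2} 1_{[t_n,τ)}(t)`,
`∫_{t_n}^{t_{n+1}} ∫_{t_n}^t |ψ(t)−ψ(s)| (t−s)^{−β−1} ds dt ≤ C (t_{n+1}−t_n)^{1/2−β}`. -/
theorem I2_estimate (β : ℝ) (hβ : 0 < β) (hβ2 : β < 1 / 2) :
    ∃ C : ℝ, 0 < C ∧ ∀ tn τ tn1 : ℝ, 0 ≤ tn → tn < τ → τ < tn1 → tn1 ≤ 1 →
      (∫ t in tn..tn1, ∫ s in tn..t,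
        |(if tn ≤ t ∧ t < τ then (tn1 - t) ^ (-(1 / 2 : ℝ)) else 0) -
          (if tn ≤ s ∧ s < τ then (tn1 - s) ^ (-(1 / 2 : ℝ)) else 0)| *
          (t - s) ^ (-β - 1))
        ≤ C * (tn1 - tn) ^ ((1 / 2 : ℝ) - β) := by
  set α : ℝ := (1/2 - β)/2 with hα
  have hα0 : 0 < α := by rw [hα]; linarith
  have hα2 : α < 1/2 := by rw [hα]; linarith
  have hb2 : (0:ℝ) < β + 1/2 := by linarith
  have hb3 : (0:ℝ) < 1/2 - β := by linarith
  refine ⟨1/α^2 + 1/((β + 1/2)*(1/2 - β)), by positivity, ?_⟩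
  intro tn τ tn1 h0 h1 h2 h3
  have htn : tn < tn1 := by linarith
  set F : ℝ → ℝ → ℝ := fun t s =>
    |(if tn ≤ t ∧ t < τ then (tn1 - t) ^ (-(1 / 2 : ℝ)) else 0) -
      (if tn ≤ s ∧ s < τ then (tn1 - s) ^ (-(1 / 2 : ℝ)) else 0)| *
      (t - s) ^ (-β - 1) with hF
  set g : ℝ → ℝ := fun t =>
    if t < τ then (1/α) * ((tn1 - t) ^ (α - 1) * (t - tn) ^ α)
    else (1/(β + 1/2)) * (t - τ) ^ (-(β + 1/2)) with hg
  -- integrability of g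
  have hi1 : IntegrableOn g (Ioo tn τ) := by
    have hcont : ContinuousOn (fun t => (1/α) * ((tn1 - t) ^ (α - 1) * (t - tn) ^ α))
        (Icc tn τ) := by
      apply ContinuousOn.mul continuousOn_const
      apply ContinuousOn.mul
      · apply ContinuousOn.rpow_const (continuous_const.sub continuous_id).continuousOn
        intro t ht
        left
        have : t ≤ τ := ht.2
        have : 0 < tn1 - t := by linarith
        exact ne_of_gt this
      · apply ContinuousOn.rpow_const (continuous_id.sub continuous_const).continuousOn
        intro t ht
        exact Or.inr hα0.le
    have hIc : IntegrableOn (fun t => (1/α) * ((tn1 - t) ^ (α - 1) * (t - tn) ^ α))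
        (Icc tn τ) volume := ContinuousOn.integrableOn_compact isCompact_Icc hcont
    have hIo := hIc.mono_set Ioo_subset_Icc_self
    apply IntegrableOn.congr_fun hIo _ measurableSet_Ioo
    intro t ht
    rw [hg]
    simp only [if_pos ht.2]
  have hi2 : IntegrableOn g (Ico τ tn1) := by
    have h1' : IntervalIntegrable (fun x : ℝ => x ^ (-(β + 1/2))) volume 0 (tn1 - τ) :=
      intervalIntegrable_rpow' (by linarith)
    have h2' := h1'.comp_sub_right τ
    simp only [zero_add, sub_add_cancel] at h2'
    have h3' := (intervalIntegrable_iff_integrableOn_Ico_of_le (by linarith : τ ≤ tn1)).mp h2'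
    have h4' : IntegrableOn (fun x => (1/(β + 1/2)) * (x - τ) ^ (-(β + 1/2)))
        (Ico τ tn1) volume := h3'.const_mul _
    apply IntegrableOn.congr_fun h4' _ measurableSet_Ico
    intro t ht
    rw [hg]
    simp only [if_neg (not_lt.mpr ht.1)]
  have hgint : IntegrableOn g (Ioo tn tn1) := by
    apply (hi1.union hi2).mono_set
    intro t ht
    by_cases htτ : t < τ
    · exact Or.inl ⟨ht.1, htτ⟩
    · exact Or.inr ⟨not_lt.mp htτ, ht.2⟩
  -- step 1 : outer integral bounded by ∫ g
  rw [integral_of_le htn.le, integral_Ioc_eq_integral_Ioo]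
  have hne : ∀ᵐ (t : ℝ), t ≠ τ := by
    rw [MeasureTheory.ae_iff]
    simpa using measure_singleton τ
  have step1 : (∫ t in Ioo tn tn1, ∫ s in tn..t, F t s) ≤ ∫ t in Ioo tn tn1, g t := by
    apply integral_mono_of_nonneg
    · filter_upwards [ae_restrict_mem measurableSet_Ioo] with t ht
      apply intervalIntegral.integral_nonneg (le_of_lt ht.1)
      intro s hs
      have hx : (0:ℝ) ≤ t - s := by have := hs.2; linarith
      rw [hF]
      positivity
    · exact hgint
    · filter_upwards [ae_restrict_mem measurableSet_Ioo, ae_restrict_of_ae hne] with t ht htne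
      rcases lt_or_gt_of_ne htne with hlt | hgt
      · rw [hg]
        simp only [if_pos hlt]
        exact inner1 β hβ hβ2 tn τ tn1 t ht.1 hlt h2
      · rw [hg]
        simp only [if_neg (not_lt.mpr hgt.le)]
        exact inner2 β hβ hβ2 tn τ tn1 t h1 hgt ht.2.le
  refine step1.trans ?_
  -- step 2 : split domain
  have hsplit : Ioo tn tn1 = Ioo tn τ ∪ Ico τ tn1 := by
    ext t
    simp only [Set.mem_union, Set.mem_Ioo, Set.mem_Ico]
    constructor
    · rintro ⟨ha, hb⟩
      by_cases htτ : t < τ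
      · exact Or.inl ⟨ha, htτ⟩
      · exact Or.inr ⟨not_lt.mp htτ, hb⟩
    · rintro (⟨ha, hb⟩ | ⟨ha, hb⟩)
      · exact ⟨ha, by linarith⟩
      · exact ⟨by linarith, hb⟩
  have hdisj : Disjoint (Ioo tn τ) (Ico τ tn1) := by
    rw [Set.disjoint_left]
    rintro t ⟨-, hb⟩ ⟨hc, -⟩
    exact absurd hb (not_lt.mpr hc)
  rw [hsplit, setIntegral_union hdisj measurableSet_Ico hi1 hi2]
  -- piece 1
  set δ := tn1 - tn with hδ
  have hδ0 : 0 < δ := by rw [hδ]; linarith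
  have piece1 : (∫ t in Ioo tn τ, g t) ≤ (1/α^2) * δ ^ ((1/2:ℝ) - β) := by
    have hbound : ∀ t ∈ Ioo tn τ, g t ≤ (1/α) * δ ^ α * (tn1 - t) ^ (α - 1) := by
      intro t ht
      rw [hg]
      simp only [if_pos ht.2]
      have hstep : (t - tn) ^ α ≤ δ ^ α := by
        apply Real.rpow_le_rpow (by linarith [ht.1]) (by rw [hδ]; linarith [ht.2]) hα0.le
      have hnn : (0:ℝ) ≤ (tn1 - t) ^ (α - 1) := Real.rpow_nonneg (by linarith [ht.2]) _
      calc (1/α) * ((tn1 - t) ^ (α - 1) * (t - tn) ^ α)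
          ≤ (1/α) * ((tn1 - t) ^ (α - 1) * δ ^ α) := by
            apply mul_le_mul_of_nonneg_left _ (by positivity)
            exact mul_le_mul_of_nonneg_left hstep hnn
        _ = (1/α) * δ ^ α * (tn1 - t) ^ (α - 1) := by ring
    have hrint : IntegrableOn (fun t => (1/α) * δ ^ α * (tn1 - t) ^ (α - 1)) (Ioo tn τ) := by
      have ha' : IntervalIntegrable (fun x : ℝ => x ^ (α - 1)) volume (tn1 - tn) (tn1 - τ) :=
        intervalIntegrable_rpow' (by linarith)
      have hb' := ha'.comp_sub_left tn1
      simp only [sub_sub_cancel] at hb'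
      have hc' := (intervalIntegrable_iff_integrableOn_Ioo_of_le h1.le).mp hb'
      exact hc'.const_mul _
    have := setIntegral_mono_on (hi1) hrint measurableSet_Ioo hbound
    refine this.trans ?_
    rw [MeasureTheory.integral_const_mul, ← integral_Ioc_eq_integral_Ioo,
      ← integral_of_le h1.le,
      integral_sub_rpow tn1 tn τ (α - 1) h1.le (by linarith) (Or.inl (by linarith))]
    have he : α - 1 + 1 = α := by ring
    rw [he]
    have hfin : ((tn1 - tn) ^ α - (tn1 - τ) ^ α) / α ≤ δ ^ α / α := by
      rw [hδ]
      apply div_le_div_of_nonneg_right _ hα0.le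
      linarith [Real.rpow_nonneg (show (0:ℝ) ≤ tn1 - τ by linarith) α]
    calc (1/α) * δ ^ α * (((tn1 - tn) ^ α - (tn1 - τ) ^ α) / α)
        ≤ (1/α) * δ ^ α * (δ ^ α / α) := by
          apply mul_le_mul_of_nonneg_left hfin (by positivity)
      _ = (1/α^2) * (δ ^ α * δ ^ α) := by
          have hgen : ∀ X a : ℝ, (1/a) * X * (X/a) = (1/a^2)*(X*X) := by
            intro X a
            ring
          exact hgen _ _
      _ = (1/α^2) * δ ^ ((1/2:ℝ) - β) := by
          rw [← Real.rpow_add hδ0]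
          congr 1
          rw [hα]; ring
  have piece2 : (∫ t in Ico τ tn1, g t) ≤ (1/((β + 1/2)*(1/2 - β))) * δ ^ ((1/2:ℝ) - β) := by
    have heq : ∀ t ∈ Ico τ tn1, g t = (1/(β + 1/2)) * (t - τ) ^ (-(β + 1/2)) := by
      intro t ht
      rw [hg]
      simp only [if_neg (not_lt.mpr ht.1)]
    rw [setIntegral_congr_fun measurableSet_Ico heq, integral_Ico_eq_integral_Ioo,
      ← integral_Ioc_eq_integral_Ioo, ← integral_of_le (by linarith : τ ≤ tn1),
      intervalIntegral.integral_const_mul]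
    have hcomp : (∫ t in τ..tn1, (t - τ) ^ (-(β + 1/2))) =
        ((tn1 - τ) ^ ((1/2:ℝ) - β)) / ((1/2:ℝ) - β) := by
      rw [intervalIntegral.integral_comp_sub_right (fun x => x ^ (-(β + 1/2))) τ, sub_self]
      rw [integral_rpow (Or.inl (by linarith))]
      rw [Real.zero_rpow (by intro hcon; linarith [hcon])]
      congr 1 <;> ring
    rw [hcomp]
    have hmono2 : (tn1 - τ) ^ ((1/2:ℝ) - β) ≤ δ ^ ((1/2:ℝ) - β) := by
      apply Real.rpow_le_rpow (by linarith) (by rw [hδ]; linarith) (by linarith)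
    calc (1/(β + 1/2)) * ((tn1 - τ) ^ ((1/2:ℝ) - β) / ((1/2:ℝ) - β))
        ≤ (1/(β + 1/2)) * (δ ^ ((1/2:ℝ) - β) / ((1/2:ℝ) - β)) := by
          apply mul_le_mul_of_nonneg_left _ (by positivity)
          gcongr
      _ = (1/((β + 1/2)*(1/2 - β))) * δ ^ ((1/2:ℝ) - β) := by
          have hgen : ∀ X b c : ℝ, (1/b) * (X/c) = (1/(b*c)) * X := by
            intro X b c
            rw [div_mul_div_comm, one_mul, one_div_mul_eq_div]
          exact hgen _ _ _
    -- done
  calc (∫ t in Ioo tn τ, g t) + ∫ t in Ico τ tn1, g t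
      ≤ (1/α^2) * δ ^ ((1/2:ℝ) - β) + (1/((β + 1/2)*(1/2 - β))) * δ ^ ((1/2:ℝ) - β) :=
        add_le_add piece1 piece2
    _ = (1/α^2 + 1/((β + 1/2)*(1/2 - β))) * δ ^ ((1/2:ℝ) - β) := by ring
end
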